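/- arXiv:2603.15451 — 3 statements merged into one kernel-verified Lean document; each statement's English description precedes it below -/
import Mathlib

section
/- Let a, b be coprime positive integers with b > 1 and set e = 1 + ⌊a/b⌋. The map sending a chip configuration D to the configuration D' defined by D'(i) = a − e − D(i) for all i ∈ {1,…,b} is a bijection from the set of superstable ((b−1)-skeletal) chip configurations onto the set of 0-skeletal chip configurations. -/
/-!
With `M = ⌊(b-1)a/b⌋`, coprimality gives `a - e = M`, so the map is the involution `D ↦ M - D`.
A firing `φ_S` is illegal on `D ≥ 0` exactly when some `i ∈ S` has `D i ≤ ⌊(b-|S|)a/b⌋`: so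
superstability says that every nonempty `S` contains such an `i`, and 0-stability says `0 ≤ D ≤ M`.
If `D` is superstable, every borrow `β_T` pushes `M - D` above `M` at such an `i ∈ T`.
Conversely, if some nonempty `S` has all its values above the threshold `⌊(b-|S|)a/b⌋`, take such
a set `T` of maximal size; then every value outside `T` is at most `⌊(b-|T|-1)a/b⌋`, and by
superadditivity of `s ↦ ⌊sa/b⌋` the borrow `β_T` keeps `M - D` within `[0, M]`.
-/

/-- The cluster-fire move `φ_S` for the quantized rational model on the
complete graph (`c = 1`): each `i ∈ S` loses `1 + ⌊(b−s)·a/b⌋` chips and each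
`j ∉ S` gains `⌊s·a/b⌋` chips, where `s = |S|`. -/
def cfire (a b : ℕ) (S : Finset (Fin b)) (D : Fin b → ℤ) : Fin b → ℤ :=
  fun i =>
    if i ∈ S then D i - 1 - (((b - S.card) * a / b : ℕ) : ℤ)
    else D i + ((S.card * a / b : ℕ) : ℤ)

/-- The borrow move `β_S = φ_S⁻¹`. -/
def cborrow (a b : ℕ) (S : Finset (Fin b)) (D : Fin b → ℤ) : Fin b → ℤ :=
  fun i =>
    if i ∈ S then D i + 1 + (((b - S.card) * a / b : ℕ) : ℤ)
    else D i - ((S.card * a / b : ℕ) : ℤ)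

/-- `D` is `k`-stable: `D ≥ 0` and no `k`-firing move `φ_S` (with
`0 < |S| ≤ k+1`) is legal on `D`. -/
def KStable (a b k : ℕ) (D : Fin b → ℤ) : Prop :=
  (∀ i, 0 ≤ D i) ∧ ∀ S : Finset (Fin b), S.Nonempty → S.card ≤ k + 1 →
    ¬ (∀ i, 0 ≤ cfire a b S D i)

/-- `D` is `k`-skeletal: `D` is `k`-stable and no legal nonempty borrow move
produces a `k`-stable configuration. -/
def KSkeletal (a b k : ℕ) (D : Fin b → ℤ) : Prop :=
  KStable a b k D ∧ ∀ T : Finset (Fin b), T.Nonempty →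
    (∀ i, 0 ≤ cborrow a b T D i) → ¬ KStable a b k (cborrow a b T D)

open Finset

lemma sub_one_mul_div_add_div_add_one {a b : ℕ} (hb : 1 < b) (hab : a.Coprime b) :
    (b - 1) * a / b + a / b + 1 = a := by
  have hmod : a % b ≠ 0 := fun h => by
    have := Nat.Coprime.eq_one_of_dvd hab.symm (Nat.dvd_of_mod_eq_zero h)
    omega
  have hsum : (b - 1) * a + a = b * a := by
    rw [← Nat.succ_mul, Nat.succ_eq_add_one, Nat.sub_add_cancel (by omega)]
  -- the two remainders add up to a positive multiple of `b`, hence to at least `b`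
  have hcarry : b ≤ (b - 1) * a % b + a % b := by
    have hdvd : b ∣ (b - 1) * a % b + a % b := by
      rw [Nat.dvd_iff_mod_eq_zero, ← Nat.add_mod, hsum, Nat.mul_mod_right]
    exact Nat.le_of_dvd (by omega) hdvd
  have := Nat.add_div_eq_of_le_mod_add_mod hcarry (by omega)
  rwa [hsum, Nat.mul_div_cancel_left _ (by omega), eq_comm] at this

lemma exists_maximal_card_of_forall_lt {ι : Type*} [Fintype ι] [DecidableEq ι] {g : ℕ → ℤ}
    (hg : Antitone g) {D : ι → ℤ} {S : Finset ι} (hS : S.Nonempty)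
    (hSD : ∀ i ∈ S, g #S < D i) :
    ∃ T : Finset ι, T.Nonempty ∧ (∀ i ∈ T, g #T < D i) ∧ ∀ j ∉ T, D j ≤ g (#T + 1) := by
  obtain ⟨T, hT, hmax⟩ := (univ.filter fun T : Finset ι => T.Nonempty ∧ ∀ i ∈ T, g #T < D i
    ).exists_max_image card ⟨S, mem_filter.2 ⟨mem_univ S, hS, hSD⟩⟩
  simp only [mem_filter, mem_univ, true_and] at hT
  refine ⟨T, hT.1, hT.2, fun j hj => not_lt.1 fun hDj => ?_⟩
  have hinsert := hmax (insert j T) <| by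
    simp only [mem_filter, mem_univ, true_and, insert_nonempty, card_insert_of_notMem hj,
      forall_mem_insert]
    exact ⟨hDj, fun i hi => (hg (Nat.le_succ _)).trans_lt (hT.2 i hi)⟩
  rw [card_insert_of_notMem hj] at hinsert
  omega

variable {a b : ℕ}

lemma antitone_sub_mul_div : Antitone fun s => (((b - s) * a / b : ℕ) : ℤ) := fun _ _ hst =>
  Nat.cast_le.2 (Nat.div_le_div_right (Nat.mul_le_mul_right a (Nat.sub_le_sub_left hst b)))

lemma sub_succ_mul_div_add_mul_div_le {s : ℕ} (hs : s < b) :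
    (b - (s + 1)) * a / b + s * a / b ≤ (b - 1) * a / b := by
  calc (b - (s + 1)) * a / b + s * a / b ≤ ((b - (s + 1)) * a + s * a) / b :=
        Nat.div_add_div_le_add_div
    _ = (b - 1) * a / b := by rw [← add_mul, show b - (s + 1) + s = b - 1 by omega]

lemma not_forall_cfire_nonneg_iff {S : Finset (Fin b)} {D : Fin b → ℤ} (hD : ∀ i, 0 ≤ D i) :
    (¬ ∀ i, 0 ≤ cfire a b S D i) ↔ ∃ i ∈ S, D i ≤ ((b - #S) * a / b : ℕ) := by
  constructor
  · rw [not_forall]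
    rintro ⟨i, hi⟩
    by_cases hiS : i ∈ S
    · exact ⟨i, hiS, by simp only [cfire, if_pos hiS] at hi; omega⟩
    · simp only [cfire, if_neg hiS] at hi
      have := hD i
      have := Int.natCast_nonneg (#S * a / b)
      omega
  · rintro ⟨i, hiS, hle⟩ h
    have := h i
    simp only [cfire, if_pos hiS] at this
    omega

lemma kStable_zero_iff {D : Fin b → ℤ} :
    KStable a b 0 D ↔ ∀ i, 0 ≤ D i ∧ D i ≤ ((b - 1) * a / b : ℕ) := by
  constructor
  · rintro ⟨hD, hfire⟩ i
    obtain ⟨j, hj, hle⟩ :=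
      (not_forall_cfire_nonneg_iff hD).1 (hfire {i} (singleton_nonempty i) (by simp))
    rw [mem_singleton.1 hj] at hle
    exact ⟨hD i, by simpa using hle⟩
  · intro h
    refine ⟨fun i => (h i).1, fun S ⟨i, hi⟩ hcard => ?_⟩
    have hS : #S = 1 := le_antisymm hcard (card_pos.2 ⟨i, hi⟩)
    exact (not_forall_cfire_nonneg_iff fun i => (h i).1).2 ⟨i, hi, hS ▸ (h i).2⟩

lemma kStable_sub_one_iff {D : Fin b → ℤ} :
    KStable a b (b - 1) D ↔ (∀ i, 0 ≤ D i) ∧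
      ∀ S : Finset (Fin b), S.Nonempty → ∃ i ∈ S, D i ≤ ((b - #S) * a / b : ℕ) := by
  have hcard (S : Finset (Fin b)) : #S ≤ b - 1 + 1 := by
    have := card_le_univ S
    rw [Fintype.card_fin] at this
    omega
  refine and_congr_right fun hD => forall_congr' fun S => ?_
  simp only [not_forall_cfire_nonneg_iff hD, hcard S, forall_const]

lemma kSkeletal_zero_sub_of_kStable_sub_one {D : Fin b → ℤ} (hD : KStable a b (b - 1) D) :
    KSkeletal a b 0 (fun i => ((b - 1) * a / b : ℕ) - D i) := by
  obtain ⟨hD0, hS⟩ := kStable_sub_one_iff.1 hD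
  refine ⟨kStable_zero_iff.2 fun i => ?_, fun T hT _ hstable => ?_⟩
  · obtain ⟨j, hj, hle⟩ := hS {i} (singleton_nonempty i)
    rw [mem_singleton.1 hj, card_singleton] at hle
    have := hD0 i
    constructor <;> omega
  · obtain ⟨i, hiT, hle⟩ := hS T hT
    have := (kStable_zero_iff.1 hstable i).2
    simp only [cborrow, if_pos hiT] at this
    omega

lemma kStable_sub_one_of_kSkeletal_zero_sub {D : Fin b → ℤ}
    (hD : KSkeletal a b 0 (fun i => ((b - 1) * a / b : ℕ) - D i)) :
    KStable a b (b - 1) D := by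
  obtain ⟨hstable, hborrow⟩ := hD
  have hbound := kStable_zero_iff.1 hstable
  have hD0 (i : Fin b) : 0 ≤ D i := by
    have := (hbound i).2
    omega
  have hDM (i : Fin b) : D i ≤ ((b - 1) * a / b : ℕ) := by
    have := (hbound i).1
    omega
  refine kStable_sub_one_iff.2 ⟨hD0, fun S hS => ?_⟩
  by_contra! hSD
  obtain ⟨T, hT, hTD, hout⟩ := exists_maximal_card_of_forall_lt antitone_sub_mul_div hS hSD
  have hsuper (j : Fin b) (hj : j ∉ T) :
      (((b - (#T + 1)) * a / b : ℕ) : ℤ) + ((#T * a / b : ℕ) : ℤ) ≤ ((b - 1) * a / b : ℕ) :=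
    mod_cast sub_succ_mul_div_add_mul_div_le (by simpa using card_lt_univ_of_notMem hj)
  have hborrow_bound (i : Fin b) : 0 ≤ cborrow a b T (fun i => ((b - 1) * a / b : ℕ) - D i) i ∧
      cborrow a b T (fun i => ((b - 1) * a / b : ℕ) - D i) i ≤ ((b - 1) * a / b : ℕ) := by
    have := hD0 i
    by_cases hi : i ∈ T
    · have := hTD i hi
      have := hDM i
      have := Int.natCast_nonneg ((b - #T) * a / b)
      simp only [cborrow, if_pos hi]
      constructor <;> omega
    · have := hout i hi
      have := hsuper i hi
      have := Int.natCast_nonneg (#T * a / b)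
      simp only [cborrow, if_neg hi]
      constructor <;> omega
  exact hborrow T hT (fun i => (hborrow_bound i).1) (kStable_zero_iff.2 hborrow_bound)

theorem duality_bijection_general (a b : ℕ) (hb : 1 < b)
    (hab : a.Coprime b) :
    Set.BijOn (fun (D : Fin b → ℤ) (i : Fin b) => (a : ℤ) - ((1 + a / b : ℕ) : ℤ) - D i)
      {D : Fin b → ℤ | KStable a b (b - 1) D}
      {D : Fin b → ℤ | KSkeletal a b 0 D} := by
  have hM : (a : ℤ) - ((1 + a / b : ℕ) : ℤ) = ((b - 1) * a / b : ℕ) := by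
    have := sub_one_mul_div_add_div_add_one hb hab
    omega
  simp only [hM]
  have hinv (D : Fin b → ℤ) :
      (fun i => (((b - 1) * a / b : ℕ) : ℤ) - ((((b - 1) * a / b : ℕ) : ℤ) - D i)) = D :=
    funext fun i => sub_sub_cancel _ _
  refine Set.InvOn.bijOn ⟨fun D _ => hinv D, fun D _ => hinv D⟩
    (fun D => kSkeletal_zero_sub_of_kStable_sub_one) fun E hE => ?_
  exact kStable_sub_one_of_kSkeletal_zero_sub (by rwa [hinv])

/-- with `e = 1 + ⌊a/b⌋`, the map `D ↦ (i ↦ a − e − D i)` is a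
bijection from superstable (`(b−1)`-skeletal) configurations onto `0`-skeletal
configurations. -/
theorem duality_bijection (a b : ℕ) (ha : 0 < a) (hb : 1 < b)
    (hab : a.Coprime b) :
    Set.BijOn (fun (D : Fin b → ℤ) (i : Fin b) => (a : ℤ) - ((1 + a / b : ℕ) : ℤ) - D i)
      {D : Fin b → ℤ | KStable a b (b - 1) D}
      {D : Fin b → ℤ | KSkeletal a b 0 D} :=
  duality_bijection_general a b hb hab
end

section
/- Let a, b be coprime positive integers. Every chip configuration D ≥ 0 has exactly one superstabilization: there is a unique superstable configuration reachable from D by a finite sequence of legal cluster-fire moves. More generally, every equivalence class of the relation ≈ contains exactly one superstable representative. -/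
/-- One (not necessarily legal) cluster-fire or borrow move. -/
def FireBorrowStep (a b : ℕ) (D D' : Fin b → ℤ) : Prop :=
  ∃ S : Finset (Fin b), D' = cfire a b S D ∨ D' = cborrow a b S D

/-- `D ≈ D'`: `D'` is obtained from `D` by a finite sequence of cluster-fire
and borrow moves (with no legality restrictions). -/
def Approx (a b : ℕ) (D D' : Fin b → ℤ) : Prop :=
  Relation.ReflTransGen (FireBorrowStep a b) D D'

/-- `D` is superstable: `D ≥ 0` and no nonempty set can legally fire,
i.e. `D` is `(b−1)`-stable. -/
def Superstable (a b : ℕ) (D : Fin b → ℤ) : Prop :=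
  KStable a b (b - 1) D

/-- One legal cluster-fire move. -/
def LegalFireStep (a b : ℕ) (D D' : Fin b → ℤ) : Prop :=
  (∀ i, 0 ≤ D i) ∧ ∃ S : Finset (Fin b), S.Nonempty ∧
    D' = cfire a b S D ∧ (∀ i, 0 ≤ D' i)

/-!
Coprimality gives `⌊(b - s) a / b⌋ + ⌊s a / b⌋ + 1 = a` for `0 < s < b`, so every move shifts all
entries by one common amount modulo `a`, and `≈`-equivalent configurations differ by a constant
modulo `a`. Superstable entries lie in `[0, a)`, and at most `⌊t b / a⌋` of them are `≥ a - t`.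
If two superstable configurations differ by `t ≢ 0` modulo `a`, each entry either rises by `t` or
drops by `a - t`, which forces `b ≤ ⌊(a - t) b / a⌋ + ⌊t b / a⌋ = b - 1`.
Existence: legal firings strictly decrease the number of chips, and borrowing with the full set
adds one chip everywhere, so every class contains a nonnegative configuration.
-/

open Finset

namespace Nat

theorem sub_mul_div_add_mul_div_add_one {a b s : ℕ} (hab : a.Coprime b) (hs : 0 < s)
    (hsb : s < b) : (b - s) * a / b + s * a / b + 1 = a := by
  have hb : 0 < b := hs.trans hsb
  have hsa : ¬ b ∣ s * a := fun h =>
    absurd (le_of_dvd hs (hab.symm.dvd_of_dvd_mul_right h)) (by omega)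
  have hsum : (b - s) * a + s * a = b * a := by rw [← add_mul, Nat.sub_add_cancel hsb.le]
  have hmod : b ≤ (b - s) * a % b + s * a % b := by
    have hdvd : b ∣ (b - s) * a % b + s * a % b := by
      rw [dvd_iff_mod_eq_zero, ← add_mod, hsum, mul_mod_right]
    have : s * a % b ≠ 0 := fun h => hsa (dvd_of_mod_eq_zero h)
    exact le_of_dvd (by omega) hdvd
  have := add_div_eq_of_le_mod_add_mod hmod hb
  rw [hsum, Nat.mul_div_cancel_left _ hb] at this
  omega

end Nat

section Moves

variable {a b : ℕ}

theorem cfire_cborrow (S : Finset (Fin b)) (D : Fin b → ℤ) :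
    cfire a b S (cborrow a b S D) = D := by
  funext i
  by_cases h : i ∈ S <;> simp only [cfire, cborrow, h, if_true, if_false] <;> ring

theorem cfire_univ (D : Fin b → ℤ) : cfire a b univ D = fun i => D i - 1 := by
  funext i
  simp [cfire]

theorem cborrow_univ (D : Fin b → ℤ) : cborrow a b univ D = fun i => D i + 1 := by
  funext i
  simp [cborrow]

theorem exists_cfire_modEq (hab : a.Coprime b) (S : Finset (Fin b)) (D : Fin b → ℤ) :
    ∃ c : ℤ, ∀ i, cfire a b S D i ≡ D i + c [ZMOD a] := by
  by_cases hS : S = univ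
  · exact ⟨-1, fun i => by simp [hS, cfire_univ, sub_eq_add_neg]⟩
  refine ⟨(S.card * a / b : ℕ), fun i => ?_⟩
  by_cases hi : i ∈ S
  · have hcard : S.card < b := by
      simpa using card_lt_card (ssubset_univ_iff.mpr hS)
    have key := Nat.sub_mul_div_add_mul_div_add_one hab (card_pos.mpr ⟨i, hi⟩) hcard
    have key' : ((b - S.card) * a / b : ℕ) + ((S.card * a / b : ℕ) : ℤ) + 1 = a := by
      exact_mod_cast key
    rw [cfire, if_pos hi, Int.modEq_iff_dvd]
    exact ⟨1, by linarith⟩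
  · simp [cfire, hi, Int.ModEq.refl]

theorem exists_cborrow_modEq (hab : a.Coprime b) (S : Finset (Fin b)) (D : Fin b → ℤ) :
    ∃ c : ℤ, ∀ i, cborrow a b S D i ≡ D i + c [ZMOD a] := by
  obtain ⟨c, hc⟩ := exists_cfire_modEq hab S (cborrow a b S D)
  refine ⟨-c, fun i => ?_⟩
  have := (hc i).symm.add_right (-c)
  rwa [cfire_cborrow, add_neg_cancel_right, ← sub_eq_add_neg] at this

theorem FireBorrowStep.exists_modEq (hab : a.Coprime b) {D D' : Fin b → ℤ}
    (h : FireBorrowStep a b D D') : ∃ c : ℤ, ∀ i, D' i ≡ D i + c [ZMOD a] := by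
  obtain ⟨S, rfl | rfl⟩ := h
  exacts [exists_cfire_modEq hab S D, exists_cborrow_modEq hab S D]

theorem Approx.exists_modEq (hab : a.Coprime b) {D D' : Fin b → ℤ} (h : Approx a b D D') :
    ∃ c : ℤ, ∀ i, D' i ≡ D i + c [ZMOD a] := by
  induction h with
  | refl => exact ⟨0, fun i => by rw [add_zero]⟩
  | tail _ hstep ih =>
    obtain ⟨c, hc⟩ := ih
    obtain ⟨d, hd⟩ := hstep.exists_modEq hab
    exact ⟨c + d, fun i => by rw [← add_assoc]; exact (hd i).trans ((hc i).add_right d)⟩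

theorem approx_add_natCast (D : Fin b → ℤ) (N : ℕ) : Approx a b D (fun i => D i + N) := by
  induction N with
  | zero =>
    simp only [Nat.cast_zero, add_zero]
    exact Relation.ReflTransGen.refl
  | succ N ih =>
    refine ih.tail ⟨univ, Or.inr ?_⟩
    rw [cborrow_univ]
    funext i
    push_cast
    ring

theorem Relation.ReflTransGen.approx {D D' : Fin b → ℤ}
    (h : Relation.ReflTransGen (LegalFireStep a b) D D') : Approx a b D D' :=
  Relation.ReflTransGen.mono (fun _ _ ⟨_, S, _, hS, _⟩ => ⟨S, Or.inl hS⟩) _ _ h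

end Moves

section Superstable

variable {a b : ℕ} {D : Fin b → ℤ}

theorem superstable_iff : Superstable a b D ↔
    (∀ i, 0 ≤ D i) ∧ ∀ S : Finset (Fin b), S.Nonempty → ¬ ∀ i, 0 ≤ cfire a b S D i := by
  refine and_congr_right fun _ => forall_congr' fun S => forall_congr' fun _ => ?_
  have : S.card ≤ b - 1 + 1 := by have := card_finset_fin_le S; omega
  simp [this]

/-- Firing `⌊t b / a⌋ + 1` of the entries that are at least `a - t` would be legal. -/
theorem Superstable.card_le {t : ℕ} (hD : Superstable a b D) (ht : t < a) :
    #{i | (a : ℤ) - t ≤ D i} ≤ t * b / a := by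
  by_contra! hcard
  obtain ⟨S, hSX, hS⟩ := exists_subset_card_eq hcard
  have hb : 0 < b := (Nat.zero_lt_of_lt hcard).trans_le (card_finset_fin_le _)
  have hsb : t * b / a + 1 ≤ b := Nat.div_lt_of_lt_mul (by nlinarith)
  have htS : t * b < S.card * a := by
    rw [hS, Nat.succ_mul]
    exact Nat.lt_div_mul_add (by omega)
  have hSb : S.card ≤ b := by omega
  have hlt : (b - S.card) * a / b < a - t := by
    apply Nat.div_lt_of_lt_mul
    have h₁ : (b - S.card) * a + S.card * a = b * a := by
      rw [← Nat.add_mul, Nat.sub_add_cancel hSb]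
    have h₂ : b * (a - t) + b * t = b * a := by rw [← Nat.mul_add, Nat.sub_add_cancel ht.le]
    linarith
  refine (superstable_iff.mp hD).2 S (card_pos.mp (by rw [hS]; exact Nat.succ_pos _)) fun i => ?_
  by_cases hi : i ∈ S
  · have hDi : (a : ℤ) - t ≤ D i := (mem_filter.mp (hSX hi)).2
    simp only [cfire, if_pos hi]
    generalize (b - S.card) * a / b = q at hlt
    omega
  · simp only [cfire, if_neg hi]
    have := hD.1 i
    positivity

theorem Superstable.lt (hD : Superstable a b D) (ha : 0 < a) (i : Fin b) : D i < a := by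
  by_contra! hi
  have := hD.card_le ha
  simp only [Nat.cast_zero, sub_zero, zero_mul, Nat.zero_div, Nat.le_zero, card_eq_zero,
    filter_eq_empty_iff] at this
  exact this (mem_univ i) hi

theorem Superstable.eq_or_eq_sub_of_modEq {D' : Fin b → ℤ} (hD : Superstable a b D)
    (hD' : Superstable a b D') (ha : 0 < a) {t : ℤ} (ht₀ : 0 ≤ t) (hta : t < a) (i : Fin b)
    (h : D' i ≡ D i + t [ZMOD a]) : D' i = D i + t ∨ D' i = D i + t - a := by
  have h₀ := hD.1 i
  have h₁ := hD.lt ha i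
  have h₀' := hD'.1 i
  have h₁' := hD'.lt ha i
  rcases lt_or_ge (D i + t) a with hlt | hge
  · left
    rwa [Int.ModEq, Int.emod_eq_of_lt h₀' h₁', Int.emod_eq_of_lt (by omega) hlt] at h
  · right
    replace h : D' i ≡ D i + t - a [ZMOD a] := h.trans (Int.modEq_iff_dvd.mpr ⟨-1, by ring⟩)
    rwa [Int.ModEq, Int.emod_eq_of_lt h₀' h₁', Int.emod_eq_of_lt (by omega) (by omega)] at h

theorem Superstable.eq_of_modEq {D' : Fin b → ℤ} (hD : Superstable a b D)
    (hD' : Superstable a b D') (ha : 0 < a) (hab : a.Coprime b) {c : ℤ}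
    (h : ∀ i, D' i ≡ D i + c [ZMOD a]) : D = D' := by
  have ha' : (0 : ℤ) < a := Int.natCast_pos.mpr ha
  obtain ⟨t, ht⟩ := Int.eq_ofNat_of_zero_le (Int.emod_nonneg c ha'.ne')
  have hta : t < a := by have := Int.emod_lt_of_pos c ha'; omega
  have hsplit (i : Fin b) : D' i = D i + t ∨ D' i = D i + t - a :=
    hD.eq_or_eq_sub_of_modEq hD' ha (Nat.cast_nonneg t) (by exact_mod_cast hta) i
      ((h i).trans (((Int.mod_modEq c a).symm.add_left (D i)).trans (by rw [ht])))
  rcases Nat.eq_zero_or_pos t with rfl | htpos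
  · funext i
    have := hD'.1 i
    have := hD.lt ha i
    rcases hsplit i with h | h <;> push_cast at h <;> omega
  · exfalso
    have hcover : univ ⊆ univ.filter (fun i => (a : ℤ) - (a - t : ℕ) ≤ D' i) ∪
        univ.filter (fun i => (a : ℤ) - t ≤ D i) := by
      intro i _
      have := hD'.1 i
      have := hD.1 i
      simp only [mem_union, mem_filter, mem_univ, true_and, Nat.cast_sub hta.le]
      rcases hsplit i with h | h <;> omega
    have hcard := (card_le_card hcover).trans (card_union_le _ _)
    have hsum := Nat.sub_mul_div_add_mul_div_add_one hab.symm htpos hta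
    have := hD'.card_le (Nat.sub_lt ha htpos)
    have := hD.card_le hta
    simp only [card_univ, Fintype.card_fin] at hcard
    omega

end Superstable

section Stabilization

variable {a b : ℕ}

theorem sum_cfire_lt {S : Finset (Fin b)} (hS : S.Nonempty) (D : Fin b → ℤ) :
    ∑ i, cfire a b S D i < ∑ i, D i := by
  set s := S.card
  set q := s * a / b
  set q' := (b - s) * a / b
  have hsb : s ≤ b := card_finset_fin_le S
  have hs : 0 < s := card_pos.mpr hS
  have hb : 0 < b := hs.trans_le hsb
  have hsum : ∑ i, cfire a b S D i = ∑ i, D i - s * (1 + q' : ℤ) + (b - s : ℕ) * (q : ℤ) := by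
    have (i : Fin b) : cfire a b S D i = D i + if i ∈ S then -(1 + q' : ℤ) else q := by
      unfold cfire; split_ifs <;> ring
    have hcompl : (univ.filter fun i => i ∉ S) = Sᶜ := by ext; simp
    simp only [this, sum_add_distrib, sum_ite, sum_const, filter_mem_eq_inter, univ_inter,
      hcompl, card_compl, Fintype.card_fin, nsmul_eq_mul]
    ring
  have hq : q * b ≤ s * a := Nat.div_mul_le_self _ _
  have hq' : (b - s) * a < (q' + 1) * b := by
    rw [Nat.add_one_mul]; exact Nat.lt_div_mul_add hb
  have key : (b - s) * q < s * (1 + q') := by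
    refine Nat.lt_of_mul_lt_mul_right (a := b) ?_
    calc (b - s) * q * b ≤ (b - s) * (s * a) := by rw [mul_assoc]; exact Nat.mul_le_mul_left _ hq
      _ = s * ((b - s) * a) := by ring
      _ < s * ((q' + 1) * b) := Nat.mul_lt_mul_of_pos_left hq' hs
      _ = s * (1 + q') * b := by ring
  rw [hsum]
  have : ((b - s : ℕ) * q : ℤ) < s * (1 + q') := by exact_mod_cast key
  linarith

theorem exists_legalFire_superstable (D : Fin b → ℤ) (hD : ∀ i, 0 ≤ D i) :
    ∃ D', Relation.ReflTransGen (LegalFireStep a b) D D' ∧ Superstable a b D' := by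
  induction hn : (∑ i, D i).toNat using Nat.strong_induction_on generalizing D with
  | _ n ih =>
  by_cases hss : Superstable a b D
  · exact ⟨D, .refl, hss⟩
  obtain ⟨S, hS, hfire⟩ : ∃ S : Finset (Fin b), S.Nonempty ∧ ∀ i, 0 ≤ cfire a b S D i := by
    simpa [superstable_iff, hD] using hss
  have hlt := sum_cfire_lt (a := a) hS D
  have hpos : 0 ≤ ∑ i, cfire a b S D i := sum_nonneg fun i _ => hfire i
  obtain ⟨D', hpath, hD'⟩ := ih _ (by omega) _ hfire rfl
  exact ⟨D', .head ⟨hD, S, hS, rfl, hfire⟩ hpath, hD'⟩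

theorem exists_approx_superstable (D : Fin b → ℤ) :
    ∃ D', Approx a b D D' ∧ Superstable a b D' := by
  obtain ⟨m, hm⟩ := (Set.finite_range D).bddBelow
  have hshift (i : Fin b) : 0 ≤ D i + (-m).toNat := by have := hm ⟨i, rfl⟩; omega
  obtain ⟨D', hpath, hD'⟩ := exists_legalFire_superstable _ hshift
  exact ⟨D', (approx_add_natCast D _).trans hpath.approx, hD'⟩

end Stabilization

theorem Superstable.eq_of_approx {a b : ℕ} {D D₁ D₂ : Fin b → ℤ} (hs₁ : Superstable a b D₁)
    (hs₂ : Superstable a b D₂) (ha : 0 < a) (hab : a.Coprime b) (h₁ : Approx a b D D₁)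
    (h₂ : Approx a b D D₂) : D₁ = D₂ := by
  obtain ⟨c₁, hc₁⟩ := h₁.exists_modEq hab
  obtain ⟨c₂, hc₂⟩ := h₂.exists_modEq hab
  refine hs₁.eq_of_modEq hs₂ ha hab (c := c₂ - c₁) fun i => ?_
  have := ((hc₁ i).add_right (c₂ - c₁)).symm
  rw [add_add_sub_cancel] at this
  exact (hc₂ i).trans this

theorem unique_superstabilization_general (a b : ℕ) (ha : 0 < a)
    (hab : a.Coprime b) :
    (∀ D : Fin b → ℤ, (∀ i, 0 ≤ D i) →
      ∃! D' : Fin b → ℤ,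
        Relation.ReflTransGen (LegalFireStep a b) D D' ∧ Superstable a b D') ∧
    (∀ D : Fin b → ℤ, ∃! D' : Fin b → ℤ, Approx a b D D' ∧ Superstable a b D') := by
  refine ⟨fun D hD => ?_, fun D => ?_⟩
  · obtain ⟨D', hDD', hD'⟩ := exists_legalFire_superstable D hD
    exact ⟨D', ⟨hDD', hD'⟩, fun E ⟨hDE, hE⟩ => hE.eq_of_approx hD' ha hab hDE.approx hDD'.approx⟩
  · obtain ⟨D', hDD', hD'⟩ := exists_approx_superstable D
    exact ⟨D', ⟨hDD', hD'⟩, fun E ⟨hDE, hE⟩ => hE.eq_of_approx hD' ha hab hDE hDD'⟩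

/-- every `D ≥ 0` has a unique superstabilization, and more
generally every `≈`-equivalence class contains exactly one superstable
configuration. -/
theorem unique_superstabilization (a b : ℕ) (ha : 0 < a) (hb : 0 < b)
    (hab : a.Coprime b) :
    (∀ D : Fin b → ℤ, (∀ i, 0 ≤ D i) →
      ∃! D' : Fin b → ℤ,
        Relation.ReflTransGen (LegalFireStep a b) D D' ∧ Superstable a b D') ∧
    (∀ D : Fin b → ℤ, ∃! D' : Fin b → ℤ, Approx a b D D' ∧ Superstable a b D') :=
  unique_superstabilization_general a b ha hab
end

section
/- Let a, b be coprime positive integers and let K be the subgroup of ℤ^b generated by a·e_1, …, a·e_b and the all-ones vector 1 = (1,…,1). For all D, D' ∈ ℤ^b, D ≈ D' if and only if D − D' ∈ K; that is, the firing-and-borrowing equivalence relation ≈ coincides with congruence modulo K. -/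
/-- The subgroup `K` of `ℤ^b` generated by `a·e_1, …, a·e_b` and the all-ones
vector. -/
def Kgrp (a b : ℕ) : AddSubgroup (Fin b → ℤ) :=
  AddSubgroup.closure
    ({fun _ => 1} ∪ Set.range fun i : Fin b => fun j => if j = i then (a : ℤ) else 0)

/-!
Every move translates `D` by a vector `v_S = fireVec a b S` depending only on `S`:
`φ_S(D) = D + v_S` and `β_S(D) = D - v_S`. Hence `D ≈ D'` exactly when `D' - D` lies in the
subgroup generated by the `v_S`. That subgroup is `K`: `v_univ = -1`, and for `∅ ≠ S ≠ univ`
coprimality makes `|S|·a/b` non-integral, so `v_S = ⌊|S|·a/b⌋ · 1 - a · 1_S`; conversely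
`a · e_i = ⌊a/b⌋ · 1 - v_{i}` when `b > 1`, and `a · e_i = a · 1` when `b = 1`.
-/

open Finset Relation

section Translation

variable {ι G : Type*} [AddCommGroup G]

def TranslateStep (v : ι → G) (x y : G) : Prop :=
  ∃ i, y = x + v i ∨ y = x - v i

instance (v : ι → G) : Std.Symm (TranslateStep v) where
  symm _ _ := by
    rintro ⟨i, rfl | rfl⟩
    · exact ⟨i, Or.inr (add_sub_cancel_right _ _).symm⟩
    · exact ⟨i, Or.inl (sub_add_cancel _ _).symm⟩

theorem reflTransGen_translateStep_iff (v : ι → G) {x y : G} :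
    ReflTransGen (TranslateStep v) x y ↔ y - x ∈ AddSubgroup.closure (Set.range v) := by
  constructor
  · intro h
    induction h with
    | refl => simp
    | tail _ hstep ih =>
      obtain ⟨i, rfl | rfl⟩ := hstep
      · simpa [add_sub_right_comm] using
          add_mem ih (AddSubgroup.subset_closure (Set.mem_range_self i))
      · simpa [sub_right_comm] using
          sub_mem ih (AddSubgroup.subset_closure (Set.mem_range_self i))
  · intro h
    suffices ∀ g ∈ AddSubgroup.closure (Set.range v), ∀ x, ReflTransGen (TranslateStep v) x (x + g)
      by simpa using this _ h x
    intro g hg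
    induction hg using AddSubgroup.closure_induction with
    | mem _ hg =>
      obtain ⟨i, rfl⟩ := hg
      exact fun x => .single ⟨i, Or.inl rfl⟩
    | zero => simp [ReflTransGen.refl]
    | add g h _ _ hg hh => exact fun x => (hg x).trans (by simpa [add_assoc] using hh (x + g))
    | neg g _ hg => exact fun x => Std.Symm.symm _ _ (by simpa [← sub_eq_add_neg] using hg (x - g))

end Translation

def fireVec (a b : ℕ) (S : Finset (Fin b)) : Fin b → ℤ :=
  fun i => if i ∈ S then -1 - (((b - S.card) * a / b : ℕ) : ℤ) else ((S.card * a / b : ℕ) : ℤ)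

theorem fireBorrowStep_eq_translateStep (a b : ℕ) :
    FireBorrowStep a b = TranslateStep (fireVec a b) := by
  ext D D'
  have hfire : ∀ S, cfire a b S D = D + fireVec a b S := fun S => by
    ext i; simp only [cfire, fireVec, Pi.add_apply]; split <;> ring
  have hborrow : ∀ S, cborrow a b S D = D - fireVec a b S := fun S => by
    ext i; simp only [cborrow, fireVec, Pi.sub_apply]; split <;> ring
  simp only [FireBorrowStep, TranslateStep, hfire, hborrow]

theorem fireVec_univ (a b : ℕ) : fireVec a b univ = -1 := by
  ext i; simp [fireVec]

/-- `s·a/b` is not an integer, so its floor and that of `a - s·a/b` add up to `a - 1`. -/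
theorem div_add_div_add_one_of_coprime {a b s : ℕ} (hab : a.Coprime b) (hs : 0 < s)
    (hsb : s < b) : s * a / b + (b - s) * a / b + 1 = a := by
  have hsum : s * a + (b - s) * a = b * a := by rw [← add_mul, Nat.add_sub_cancel' hsb.le]
  have hndvd : ¬ b ∣ s * a := fun h =>
    (Nat.le_of_dvd hs (hab.symm.dvd_of_dvd_mul_right h)).not_gt hsb
  have hmod : b ≤ s * a % b + (b - s) * a % b :=
    Nat.le_mod_add_mod_of_dvd_add_of_not_dvd (hsum ▸ dvd_mul_right b a) hndvd
  rw [← Nat.add_div_eq_of_le_mod_add_mod hmod (hs.trans hsb), hsum,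
    Nat.mul_div_cancel_left a (hs.trans hsb)]

theorem fireVec_of_ne_univ {a b : ℕ} (hab : a.Coprime b) {S : Finset (Fin b)} (hS : S ≠ univ) :
    fireVec a b S = ((S.card * a / b : ℕ) : ℤ) • 1 - ∑ i ∈ S, Pi.single i (a : ℤ) := by
  ext j
  simp only [fireVec, Pi.sub_apply, Pi.smul_apply, Pi.one_apply, smul_eq_mul, mul_one,
    Finset.sum_apply, Pi.single_apply, Finset.sum_ite_eq]
  split_ifs with hj
  · have hs : 0 < S.card := Finset.card_pos.mpr ⟨j, hj⟩
    have hsb : S.card < b := by simpa using (Finset.card_lt_iff_ne_univ S).mpr hS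
    have := div_add_div_add_one_of_coprime hab hs hsb
    omega
  · ring

theorem Kgrp_eq_closure_single (a b : ℕ) :
    Kgrp a b = AddSubgroup.closure ({1} ∪ Set.range fun i : Fin b => Pi.single i (a : ℤ)) := by
  simp_rw [Kgrp, ← Pi.single_apply]
  rfl

theorem one_mem_Kgrp (a b : ℕ) : (1 : Fin b → ℤ) ∈ Kgrp a b :=
  Kgrp_eq_closure_single a b ▸ AddSubgroup.subset_closure (Set.mem_union_left _ rfl)

theorem single_mem_Kgrp (a b : ℕ) (i : Fin b) : Pi.single i (a : ℤ) ∈ Kgrp a b :=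
  Kgrp_eq_closure_single a b ▸ AddSubgroup.subset_closure (Set.mem_union_right _ ⟨i, rfl⟩)

theorem one_mem_closure_fireVec (a b : ℕ) :
    (1 : Fin b → ℤ) ∈ AddSubgroup.closure (Set.range (fireVec a b)) := by
  simpa [fireVec_univ] using neg_mem (AddSubgroup.subset_closure (Set.mem_range_self
    (f := fireVec a b) univ))

theorem sum_single_mem_closure_fireVec {a b : ℕ} (hab : a.Coprime b) (S : Finset (Fin b)) :
    ∑ i ∈ S, Pi.single i (a : ℤ) ∈ AddSubgroup.closure (Set.range (fireVec a b)) := by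
  by_cases hS : S = univ
  · convert zsmul_mem (one_mem_closure_fireVec a b) a using 1
    ext j
    simp [hS]
  · have h := fireVec_of_ne_univ hab hS
    rw [eq_sub_iff_add_eq, ← eq_sub_iff_add_eq'] at h
    rw [h]
    exact sub_mem (zsmul_mem (one_mem_closure_fireVec a b) _)
      (AddSubgroup.subset_closure (Set.mem_range_self S))

theorem closure_range_fireVec {a b : ℕ} (hab : a.Coprime b) :
    AddSubgroup.closure (Set.range (fireVec a b)) = Kgrp a b := by
  apply le_antisymm
  · rw [AddSubgroup.closure_le]
    rintro _ ⟨S, rfl⟩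
    by_cases hS : S = univ
    · simpa [hS, fireVec_univ] using neg_mem (one_mem_Kgrp a b)
    · rw [fireVec_of_ne_univ hab hS]
      exact sub_mem (zsmul_mem (one_mem_Kgrp a b) _)
        (sum_mem fun i _ => single_mem_Kgrp a b i)
  · rw [Kgrp_eq_closure_single, AddSubgroup.closure_le]
    rintro _ (rfl | ⟨i, rfl⟩)
    · exact one_mem_closure_fireVec a b
    · simpa using sum_single_mem_closure_fireVec hab {i}

theorem approx_iff_mem_K_general (a b : ℕ) (hab : a.Coprime b) (D D' : Fin b → ℤ) :
    Approx a b D D' ↔ D - D' ∈ Kgrp a b := by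
  rw [Approx, fireBorrowStep_eq_translateStep, reflTransGen_translateStep_iff,
    closure_range_fireVec hab, ← neg_mem_iff, neg_sub]

/-- the firing-and-borrowing equivalence `≈` coincides with
congruence modulo the subgroup `K`. -/
theorem approx_iff_mem_K (a b : ℕ) (ha : 0 < a) (hb : 0 < b)
    (hab : a.Coprime b) (D D' : Fin b → ℤ) :
    Approx a b D D' ↔ D - D' ∈ Kgrp a b :=
  approx_iff_mem_K_general a b hab D D'
end
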